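/- With s_j(ℓ) = |S_j(ℓ)| (for fixed m and fixed r ≤ min(m, 2^ℓ)), the recurrence s_j(ℓ+1) = Σ_{w=0}^{m} C(m, w) · s_{max(2j+1-w, 0)}(ℓ) holds for all 0 ≤ j ≤ m-1, where we set s_l(ℓ) = 0 for l ≥ m; equivalently, the vector (s_0(ℓ+1),...,s_{m-1}(ℓ+1)) equals A_m times (s_0(ℓ),...,s_{m-1}(ℓ)), with A_m the m×m matrix whose (j, 0) entry is Σ_{w ≥ 2j+1} C(m, w) and whose (j, t) entry for t ≥ 1 is C(m, 2j + 1 - t). -/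

import Mathlib

open Finset

def le2 (a b : ℕ) : Prop := ∀ t, a.testBit t = true → b.testBit t = true

def memS (m r ℓ j : ℕ) (d : Fin m → ℕ) : Prop :=
  ∃ i : Fin m → ℕ, (∀ k, i k < 2 ^ ℓ) ∧ (∀ k, le2 (i k) (d k)) ∧
    (∑ k, i k) = (2 ^ ℓ - r) + j * 2 ^ ℓ

/-- s_j(ℓ) = |S_j(ℓ)|, the number of tuples d ∈ Z_{2^ℓ}^m in S_j(ℓ). -/
noncomputable def sCard (m r ℓ j : ℕ) : ℕ :=
  Set.ncard {d : Fin m → ℕ | (∀ k, d k < 2 ^ ℓ) ∧ memS m r ℓ j d}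

lemma le2_refl (a : ℕ) : le2 a a := fun _ h => h

lemma le2_trans {a b c : ℕ} (h1 : le2 a b) (h2 : le2 b c) : le2 a c :=
  fun t ht => h2 t (h1 t ht)

lemma le2_le {a b : ℕ} (h : le2 a b) : a ≤ b := Nat.le_of_testBit h

lemma le2_zero (b : ℕ) : le2 0 b := fun t ht => by simp at ht

lemma le2_of_le_of_lt_two {c b : ℕ} (hb : b < 2) (h : c ≤ b) : le2 c b := by
  interval_cases b <;> interval_cases c <;> first | exact le2_zero _ | exact le2_refl _

lemma le2_split {n x0 y0 c b : ℕ} (hx0 : x0 < 2 ^ n) (hy0 : y0 < 2 ^ n) :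
    le2 (2 ^ n * c + x0) (2 ^ n * b + y0) ↔ le2 x0 y0 ∧ le2 c b := by
  constructor
  · intro h
    constructor
    · intro t ht
      have hlt : t < n := by
        by_contra hge
        have : x0 < 2 ^ t := lt_of_lt_of_le hx0 (Nat.pow_le_pow_right (by norm_num) (le_of_not_gt hge))
        rw [Nat.testBit_lt_two_pow this] at ht; exact absurd ht (by simp)
      have := h t (by rw [Nat.testBit_two_pow_mul_add _ hx0, if_pos hlt]; exact ht)
      rwa [Nat.testBit_two_pow_mul_add _ hy0, if_pos hlt] at this
    · intro t ht
      have := h (n + t) (by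
        rw [Nat.testBit_two_pow_mul_add _ hx0, if_neg (by omega), Nat.add_sub_cancel_left]
        exact ht)
      rwa [Nat.testBit_two_pow_mul_add _ hy0, if_neg (by omega), Nat.add_sub_cancel_left] at this
  · rintro ⟨h1, h2⟩ t ht
    rw [Nat.testBit_two_pow_mul_add _ hx0] at ht
    rw [Nat.testBit_two_pow_mul_add _ hy0]
    by_cases hlt : t < n
    · rw [if_pos hlt] at ht ⊢; exact h1 t ht
    · rw [if_neg hlt] at ht ⊢; exact h2 _ ht

lemma sub_bits {m : ℕ} : ∀ (n : ℕ) (i : Fin m → ℕ), (∀ k, i k < 2 ^ n) → 2 ^ n ≤ ∑ k, i k →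
    ∃ i' : Fin m → ℕ, (∀ k, le2 (i' k) (i k)) ∧ (∑ k, i' k) + 2 ^ n = ∑ k, i k := by
  intro n
  induction n with
  | zero =>
    intro i hlt hsum
    have : ∀ k, i k = 0 := fun k => by have := hlt k; omega
    simp [Finset.sum_congr rfl (fun k _ => this k)] at hsum
  | succ n IH =>
    intro i hlt hsum
    set a : Fin m → ℕ := fun k => i k % 2 ^ n with ha_def
    set c : Fin m → ℕ := fun k => i k / 2 ^ n with hc_def
    have hic : ∀ k, i k = 2 ^ n * c k + a k := fun k => (Nat.div_add_mod (i k) (2 ^ n)).symm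
    have ha : ∀ k, a k < 2 ^ n := fun k => Nat.mod_lt _ (pow_pos (by norm_num) n)
    have hc1 : ∀ k, c k ≤ 1 := by
      intro k
      have h2 : i k < 2 * 2 ^ n := by have := hlt k; rw [pow_succ] at this; omega
      have := (Nat.div_lt_iff_lt_mul (pow_pos (by norm_num) n)).mpr h2
      simp only [hc_def]
      omega
    have hsum_split : ∑ k, i k = 2 ^ n * (∑ k, c k) + ∑ k, a k := by
      rw [Finset.mul_sum, ← Finset.sum_add_distrib]
      exact Finset.sum_congr rfl fun k _ => hic k
    have hle_a : ∀ k, le2 (a k) (i k) := by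
      intro k
      have h := (le2_split (ha k) (ha k)).mpr ⟨le2_refl (a k), le2_zero (c k)⟩
      rw [hic k]
      simpa using h
    have hpow : (2:ℕ) ^ (n+1) = 2 ^ n + 2 ^ n := by ring
    by_cases h0 : ∑ k, c k = 0
    · have hceq : ∀ k, c k = 0 := by
        intro k
        have := Finset.sum_eq_zero_iff.mp h0 k (Finset.mem_univ k)
        exact this
      have hia : ∀ k, i k = a k := fun k => by rw [hic k, hceq k]; ring
      have hsa : ∑ k, i k = ∑ k, a k := Finset.sum_congr rfl fun k _ => hia k
      have h1 : 2 ^ n ≤ ∑ k, a k := by omega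
      obtain ⟨a', ha'le, ha'sum⟩ := IH a ha h1
      have ha' : ∀ k, a' k < 2 ^ n := fun k => lt_of_le_of_lt (le2_le (ha'le k)) (ha k)
      have h2 : 2 ^ n ≤ ∑ k, a' k := by omega
      obtain ⟨a'', ha''le, ha''sum⟩ := IH a' ha' h2
      refine ⟨a'', fun k => ?_, by omega⟩
      rw [hia k]
      exact le2_trans (ha''le k) (ha'le k)
    by_cases h1 : ∑ k, c k = 1
    · have hsa : 2 ^ n ≤ ∑ k, a k := by
        rw [hsum_split, h1] at hsum; omega
      obtain ⟨a', ha'le, ha'sum⟩ := IH a ha hsa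
      refine ⟨a', fun k => le2_trans (ha'le k) (hle_a k), ?_⟩
      rw [hsum_split, h1]; omega
    · -- ∑ c ≥ 2
      have h2 : 2 ≤ ∑ k, c k := by omega
      obtain ⟨k1, _, hk1⟩ := Finset.exists_ne_zero_of_sum_ne_zero (by omega : ∑ k, c k ≠ 0)
      have hck1 : c k1 = 1 := by have := hc1 k1; omega
      have herase : ∑ k ∈ Finset.univ.erase k1, c k ≠ 0 := by
        have := Finset.add_sum_erase Finset.univ c (Finset.mem_univ k1)
        omega
      obtain ⟨k2, hk2mem, hk2⟩ := Finset.exists_ne_zero_of_sum_ne_zero herase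
      have hne : k2 ≠ k1 := Finset.ne_of_mem_erase hk2mem
      have hck2 : c k2 = 1 := by have := hc1 k2; omega
      refine ⟨fun k => if k = k1 then a k1 else if k = k2 then a k2 else i k, fun k => ?_, ?_⟩
      · by_cases e1 : k = k1
        · subst e1; simp [hle_a k]
        by_cases e2 : k = k2
        · subst e2; simp [e1, hle_a k]
        · simp [e1, e2, le2_refl]
      · have key : ∀ k, i k = (if k = k1 then a k1 else if k = k2 then a k2 else i k)
            + ((if k = k1 then 2 ^ n else 0) + (if k = k2 then 2 ^ n else 0)) := by
          intro k
          by_cases e1 : k = k1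
          · subst e1
            have hkk2 : k ≠ k2 := fun h => hne h.symm
            rw [if_pos rfl, if_pos rfl, if_neg hkk2, hic k, hck1]
            ring
          by_cases e2 : k = k2
          · subst e2
            rw [if_neg e1, if_pos rfl, if_neg e1, if_pos rfl, hic k, hck2]
            ring
          · rw [if_neg e1, if_neg e2, if_neg e1, if_neg e2]
            ring
        rw [Finset.sum_congr rfl (fun k _ => key k), Finset.sum_add_distrib,
          Finset.sum_add_distrib, Finset.sum_ite_eq' Finset.univ k1 (fun _ => 2 ^ n),
          Finset.sum_ite_eq' Finset.univ k2 (fun _ => 2 ^ n)]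
        simp only [Finset.mem_univ, if_pos]
        omega
lemma memS_step {m r n l : ℕ} {d : Fin m → ℕ} (h : memS m r n (l + 1) d) : memS m r n l d := by
  obtain ⟨i, hlt, hle, hsum⟩ := h
  have hmul : (l + 1) * 2 ^ n = l * 2 ^ n + 2 ^ n := by ring
  have hge : 2 ^ n ≤ ∑ k, i k := by omega
  obtain ⟨i', hle', hsum'⟩ := sub_bits n i hlt hge
  exact ⟨i', fun k => lt_of_le_of_lt (le2_le (hle' k)) (hlt k),
    fun k => le2_trans (hle' k) (hle k), by omega⟩

lemma memS_anti {m r n : ℕ} {d : Fin m → ℕ} {l l' : ℕ} (hl : l' ≤ l) (h : memS m r n l d) :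
    memS m r n l' d := by
  obtain ⟨k, rfl⟩ := Nat.exists_eq_add_of_le hl
  induction k with
  | zero => simpa using h
  | succ k IH => exact IH (Nat.le_add_right _ _) (memS_step (by rwa [show l' + (k+1) = (l' + k) + 1 from by ring] at h))

open Classical in
noncomputable def Fs (m r ℓ j : ℕ) : Finset (Fin m → ℕ) :=
  (Fintype.piFinset fun _ => Finset.range (2 ^ ℓ)).filter (memS m r ℓ j)

lemma mem_Fs {m r ℓ j : ℕ} {d : Fin m → ℕ} :
    d ∈ Fs m r ℓ j ↔ (∀ k, d k < 2 ^ ℓ) ∧ memS m r ℓ j d := by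
  simp [Fs, Fintype.mem_piFinset, Finset.mem_filter, Finset.mem_range]

lemma sCard_eq_card (m r ℓ j : ℕ) : sCard m r ℓ j = (Fs m r ℓ j).card := by
  rw [sCard, ← Set.ncard_coe_finset]
  congr 1
  ext d
  simp [mem_Fs]
theorem stmt10 (ℓ m r : ℕ) (hm : 1 ≤ m) (hr : 1 ≤ r) (hrm : r ≤ m) (hrq : r ≤ 2 ^ ℓ)
    (j : ℕ) (hj : j ≤ m - 1) :
    sCard m r (ℓ + 1) j =
      ∑ w ∈ Finset.range (m + 1), m.choose w * sCard m r ℓ (2 * j + 1 - w) := by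
  classical
  set P := 2 ^ ℓ with hP
  have hP1' : 0 < P := pow_pos (by norm_num) ℓ
  have hpow : (2:ℕ) ^ (ℓ + 1) = 2 * P := by rw [hP, pow_succ]; ring
  have key : (Fs m r (ℓ + 1) j).card
      = (((Finset.univ : Finset (Fin m)).powerset).sigma
          (fun s => Fs m r ℓ (2 * j + 1 - s.card))).card := by
    refine Finset.card_bij'
      (fun d _ => ⟨Finset.univ.filter (fun k => P ≤ d k), fun k => d k % P⟩)
      (fun p _ => fun k => P * (if k ∈ p.1 then 1 else 0) + p.2 k)
      ?_ ?_ ?_ ?_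
    · -- forward membership
      intro d hd
      rw [mem_Fs] at hd
      obtain ⟨hdlt, i, hilt, hile, hisum⟩ := hd
      rw [Finset.mem_sigma]
      refine ⟨Finset.mem_powerset.mpr (Finset.subset_univ _), ?_⟩
      rw [mem_Fs]
      refine ⟨fun k => Nat.mod_lt _ hP1', ?_⟩
      set b : Fin m → ℕ := fun k => d k / P with hb
      set c : Fin m → ℕ := fun k => i k / P with hc
      have hdb : ∀ k, d k = P * b k + d k % P := fun k => (Nat.div_add_mod _ _).symm
      have hib : ∀ k, i k = P * c k + i k % P := fun k => (Nat.div_add_mod _ _).symm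
      have hb1 : ∀ k, b k ≤ 1 := by
        intro k
        have h2 : d k < 2 * P := by have := hdlt k; rw [hpow] at this; omega
        have := (Nat.div_lt_iff_lt_mul hP1').mpr h2
        simp only [hb]; omega
      have hsplit : ∀ k, le2 (i k % P) (d k % P) ∧ le2 (c k) (b k) := by
        intro k
        have h := hile k
        rw [hib k, hdb k] at h
        exact (le2_split (Nat.mod_lt _ hP1') (Nat.mod_lt _ hP1')).mp h
      have hiS : ∑ k, i k = P * (∑ k, c k) + ∑ k, i k % P := by
        rw [Finset.mul_sum, ← Finset.sum_add_distrib]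
        exact Finset.sum_congr rfl fun k _ => hib k
      rw [hpow] at hisum
      have hj2 : j * (2 * P) = 2 * (j * P) := by ring
      have hsum2 : ∑ k, i k % P + P * (∑ k, c k) = (2 * P - r) + 2 * (j * P) := by omega
      have hbw : ∀ k, b k = if P ≤ d k then 1 else 0 := by
        intro k
        by_cases h : P ≤ d k
        · rw [if_pos h]
          have h1 : 1 ≤ b k := by
            simp only [hb]; exact (Nat.one_le_div_iff hP1').mpr h
          have := hb1 k; omega
        · rw [if_neg h]
          simp only [hb]; exact Nat.div_eq_of_lt (lt_of_not_ge h)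
      have hw : (Finset.univ.filter (fun k => P ≤ d k)).card = ∑ k, b k := by
        rw [Finset.sum_congr rfl (fun k _ => hbw k), Finset.sum_boole]
        simp
      have hWle : (∑ k, c k) ≤ ∑ k, b k :=
        Finset.sum_le_sum (fun k _ => le2_le (hsplit k).2)
      have h1 : P * (∑ k, c k) ≤ (2 * P - r) + 2 * (j * P) := by omega
      have h2 : (2 * P - r) + 2 * (j * P) < P * (2 * j + 2) := by
        have e1 : P * (2 * j + 2) = 2 * (j * P) + 2 * P := by ring
        omega
      have hW2j : (∑ k, c k) ≤ 2 * j + 1 := by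
        have := Nat.lt_of_mul_lt_mul_left (lt_of_le_of_lt h1 h2)
        omega
      refine memS_anti (by rw [hw]; exact Nat.sub_le_sub_left hWle _)
        (⟨fun k => i k % P, fun k => Nat.mod_lt _ hP1', fun k => (hsplit k).1, ?_⟩ :
          memS m r ℓ (2 * j + 1 - (∑ k, c k)) _)
      simp only [← hP]
      show (∑ k, i k % P) = (P - r) + (2 * j + 1 - (∑ k, c k)) * P
      have e3 : (2 * j + 1 - (∑ k, c k)) * P + (∑ k, c k) * P = (2 * j + 1) * P := by
        rw [← Nat.add_mul, Nat.sub_add_cancel hW2j]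
      have e4 : (2 * j + 1) * P = 2 * (j * P) + P := by ring
      have e5 : (∑ k, c k) * P = P * (∑ k, c k) := by ring
      omega
    · -- backward membership
      rintro ⟨s, d0⟩ hmem
      rw [Finset.mem_sigma] at hmem
      obtain ⟨-, hd0⟩ := hmem
      rw [mem_Fs] at hd0
      obtain ⟨hd0lt0, i0, hi0lt, hi0le0, hi0sum0⟩ := hd0
      have hd0lt : ∀ k, d0 k < 2 ^ ℓ := hd0lt0
      have hi0le : ∀ k, le2 (i0 k) (d0 k) := hi0le0
      have hi0sum : (∑ k, i0 k) = (2 ^ ℓ - r) + (2 * j + 1 - s.card) * 2 ^ ℓ := hi0sum0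
      dsimp only
      rw [mem_Fs]
      constructor
      · intro k
        rw [hpow]
        have := hd0lt k
        by_cases h : k ∈ s <;> simp [h] <;> omega
      · obtain ⟨s', hs'sub, hs'card⟩ :=
          Finset.exists_subset_card_eq (s := s) (n := min s.card (2 * j + 1)) (min_le_left _ _)
        refine ⟨fun k => P * (if k ∈ s' then 1 else 0) + i0 k, ?_, ?_, ?_⟩
        · intro k
          rw [hpow]
          have := hi0lt k
          by_cases h : k ∈ s' <;> simp [h] <;> omega
        · intro k
          refine (le2_split (hi0lt k) (hd0lt k)).mpr
            ⟨hi0le k, le2_of_le_of_lt_two (by split <;> norm_num) ?_⟩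
          by_cases h : k ∈ s'
          · simp [h, hs'sub h]
          · simp [h]
        · rw [Finset.sum_add_distrib, ← Finset.mul_sum]
          have hcnt : (∑ k, if k ∈ s' then (1:ℕ) else 0) = min s.card (2 * j + 1) := by
            rw [Finset.sum_boole]
            simp [Finset.filter_mem_eq_inter, hs'card]
          rw [hcnt, hi0sum, hpow]
          simp only [← hP]
          have e3 : (2 * j + 1 - s.card) * P + (min s.card (2 * j + 1)) * P
              = (2 * j + 1) * P := by
            rw [← Nat.add_mul]; congr 1; omega
          have e4 : (2 * j + 1) * P = 2 * (j * P) + P := by ring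
          have e5 : j * (2 * P) = 2 * (j * P) := by ring
          have e6 : P * min s.card (2 * j + 1) = min s.card (2 * j + 1) * P := by ring
          omega
    · -- left inverse
      intro d hd
      rw [mem_Fs] at hd
      funext k
      have hrem : d k % P < P := Nat.mod_lt _ hP1'
      have hfull := Nat.div_add_mod (d k) P
      have hq : d k / P ≤ 1 := by
        have h2 : d k < 2 * P := by have := hd.1 k; rw [hpow] at this; omega
        have := (Nat.div_lt_iff_lt_mul hP1').mpr h2
        omega
      simp only [Finset.mem_filter, Finset.mem_univ, true_and]
      rcases Nat.le_one_iff_eq_zero_or_eq_one.mp hq with h0 | h1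
      · rw [h0] at hfull
        by_cases h : P ≤ d k <;> simp [h] <;> omega
      · rw [h1] at hfull
        by_cases h : P ≤ d k <;> simp [h] <;> omega
    · -- right inverse
      rintro ⟨s, d0⟩ hmem
      rw [Finset.mem_sigma] at hmem
      obtain ⟨-, hd0⟩ := hmem
      rw [mem_Fs] at hd0
      obtain ⟨hd0lt, -⟩ := hd0
      have hfil : Finset.univ.filter (fun k => P ≤ P * (if k ∈ s then 1 else 0) + d0 k) = s := by
        ext k
        simp only [Finset.mem_filter, Finset.mem_univ, true_and]
        by_cases h : k ∈ s
        · simp only [h, if_pos, iff_true]; omega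
        · have := hd0lt k
          simp only [h, if_neg, iff_false, not_le, not_false_iff]
          simpa using this
      have hmod : (fun k => (P * (if k ∈ s then 1 else 0) + d0 k) % P) = d0 := by
        funext k
        by_cases h : k ∈ s
        · simp [h, Nat.add_mod_left, Nat.mod_eq_of_lt (show d0 k < P from hd0lt k)]
        · simp [h, Nat.mod_eq_of_lt (show d0 k < P from hd0lt k)]
      dsimp only
      exact Sigma.ext hfil (heq_of_eq hmod)
  rw [sCard_eq_card, key, Finset.card_sigma]
  rw [Finset.sum_powerset_apply_card (f := fun w => (Fs m r ℓ (2 * j + 1 - w)).card)]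
  simp only [Finset.card_univ, Fintype.card_fin, smul_eq_mul]
  exact Finset.sum_congr rfl fun w _ => by rw [sCard_eq_card]
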